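/- Let t ≥ 2 and q ≥ 2 be integers, let G be a finite t-broom-free graph, and let V_1, …, V_q be pairwise disjoint nonempty independent sets in G with |V_q| = t such that Q := G[V_1 ∪ ⋯ ∪ V_q] is a complete q-partite graph with parts V_1, …, V_q. Let W = {v ∈ N(V(Q)) : v is anticomplete to V_q}. Then ω(G[W]) ≤ ω(G) − 1; indeed, every clique of G[W] can be extended to a larger clique of G by adding a vertex of V_1 ∪ ⋯ ∪ V_{q-1}. -/

import Mathlib

open SimpleGraph

/-- The `t`-broom: `K_{1,t+1}` with one edge subdivided once.
Vertex `0` is `u₀`, vertex `1` is `v₁`, vertex `2` is `v₂`,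
and vertices `3, …, t+2` are `u₁, …, u_t`. -/
def tBroom (t : ℕ) : SimpleGraph (Fin (t + 3)) :=
  SimpleGraph.fromRel (fun a b =>
    (a = 0 ∧ b = 1) ∨ (a = 1 ∧ b = 2) ∨ (a = 0 ∧ 3 ≤ b.val))

/-- `G` is `H`-free: no induced subgraph of `G` is isomorphic to `H`.
(A graph embedding `H ↪g G` is exactly an isomorphism of `H` onto an induced subgraph of `G`.) -/
def Free {V W : Type*} (G : SimpleGraph V) (H : SimpleGraph W) : Prop :=
  ¬ Nonempty (H ↪g G)

/-- The neighborhood `N(S)` of a set `S`: vertices outside `S` with a neighbor in `S`. -/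
def nbhd {V : Type*} (G : SimpleGraph V) (S : Set V) : Set V :=
  {v | v ∉ S ∧ ∃ u ∈ S, G.Adj u v}

/-- `v` is complete to `S`: adjacent to every vertex of `S`. -/
def CompleteTo {V : Type*} (G : SimpleGraph V) (v : V) (S : Set V) : Prop :=
  ∀ u ∈ S, G.Adj v u

/-- `v` is anticomplete to `S`: adjacent to no vertex of `S`. -/
def AnticompleteTo {V : Type*} (G : SimpleGraph V) (v : V) (S : Set V) : Prop :=
  ∀ u ∈ S, ¬ G.Adj v u

/-- `v` is neutral to `S`: neither complete nor anticomplete to `S`. -/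
def NeutralTo {V : Type*} (G : SimpleGraph V) (v : V) (S : Set V) : Prop :=
  ¬ CompleteTo G v S ∧ ¬ AnticompleteTo G v S

/-- `S` is an independent set of size `s` in `G`. -/
def IsNIndepSet' {V : Type*} (G : SimpleGraph V) (s : ℕ) (S : Finset V) : Prop :=
  S.card = s ∧ ∀ u ∈ S, ∀ v ∈ S, u ≠ v → ¬ G.Adj u v

/-- `R` has the Ramsey property for `(s, n)`: every finite simple graph on at least `R`
vertices contains an independent set of size `s` or a clique of size `n`. -/
def RamseyProp (R s n : ℕ) : Prop :=
  ∀ (W : Type) [Fintype W] (H : SimpleGraph W), R ≤ Fintype.card W →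
    (∃ S : Finset W, IsNIndepSet' H s S) ∨ (∃ S : Finset W, H.IsNClique n S)

/-- The distance (in `ℕ∞`) from a set `S` to a vertex `v`:
the minimum over `u ∈ S` of the distance from `u` to `v`. -/
noncomputable def eDistSet {V : Type*} (G : SimpleGraph V) (S : Set V) (v : V) : ℕ∞ :=
  ⨅ u ∈ S, G.edist u v

/-- `N^i(S)`: the set of vertices (outside `S`) at distance exactly `i` from `S`. -/
noncomputable def distNbhd {V : Type*} (G : SimpleGraph V) (S : Set V) (i : ℕ) : Set V :=
  {v | v ∉ S ∧ eDistSet G S v = (i : ℕ∞)}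

/-- `N^{≥ i}(S) = ⋃_{j ≥ i} N^j(S)`. -/
noncomputable def distNbhdGe {V : Type*} (G : SimpleGraph V) (S : Set V) (i : ℕ) : Set V :=
  ⋃ j ∈ {j : ℕ | i ≤ j}, distNbhd G S j

/-- Given the union `U = V_1 ∪ ⋯ ∪ V_{q-1}` and the last part `Vq`, the set
`W_I = {v ∈ W : v complete to I, anticomplete to U \ I}`, where
`W = {v ∈ N(U ∪ Vq) : v anticomplete to Vq}`. -/
def Wpart {V : Type*} (G : SimpleGraph V) (U Vq I : Set V) : Set V :=
  {v ∈ nbhd G (U ∪ Vq) | AnticompleteTo G v Vq ∧ CompleteTo G v I ∧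
    AnticompleteTo G v (U \ I)}

/-!
A clique `K` of `G[W]` that is nonempty has a vertex `w` with a neighbour `u` in
`V_1 ∪ ⋯ ∪ V_{q-1}`, since `w` sees nothing in `V_q`. If `u` missed some `w' ∈ K`, then `u` with
the path `u w w'` and the `t` leaves `V_q` (complete to `u`, anticomplete to `w` and `w'`) would
induce a `t`-broom. So `u` extends `K`, and extending a maximum clique of `G[W]` bounds `ω(G[W])`.
-/

section

variable {V : Type*} {G : SimpleGraph V}

theorem tBroom_adj_iff {t : ℕ} {a b : Fin (t + 3)} :
    (tBroom t).Adj a b ↔ a.val ≠ b.val ∧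
      (a.val = 0 ∧ b.val = 1 ∨ a.val = 1 ∧ b.val = 2 ∨ a.val = 0 ∧ 3 ≤ b.val ∨
        b.val = 0 ∧ a.val = 1 ∨ b.val = 1 ∧ a.val = 2 ∨ b.val = 0 ∧ 3 ≤ a.val) := by
  simp only [tBroom, fromRel_adj, ne_eq, Fin.ext_iff, Fin.val_zero, Fin.val_one, Fin.val_two]
  tauto

/-- The centre `x` goes to `u₀`, the path `x - w - w'` to `u₀ - v₁ - v₂`, and `g` to the leaves. -/
theorem tBroom_isIndContained {t : ℕ} {x w w' : V} {g : Fin t → V} (hg : Function.Injective g)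
    (hxw : G.Adj x w) (hww' : G.Adj w w') (hxw' : ¬ G.Adj x w') (hxw'_ne : x ≠ w')
    (hxg : ∀ i, G.Adj x (g i)) (hwg : ∀ i, ¬ G.Adj w (g i)) (hw'g : ∀ i, ¬ G.Adj w' (g i))
    (hgg : ∀ i j, ¬ G.Adj (g i) (g j)) (hw : w ∉ Set.range g) (hw' : w' ∉ Set.range g) :
    tBroom t ⊴ G := by
  refine ⟨⟨⟨Fin.cons x (Fin.cons w (Fin.cons w' g)), ?_⟩, fun {a b} => ?_⟩⟩
  · simp only [Fin.cons_injective_iff, Fin.range_cons, Set.mem_insert_iff, not_or]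
    exact ⟨⟨hxw.ne, hxw'_ne, fun ⟨i, hi⟩ => (hxg i).ne hi.symm⟩, ⟨hww'.ne, hw⟩, hw', hg⟩
  rw [Function.Embedding.coeFn_mk, tBroom_adj_iff]
  induction a using Fin.cases <;>
    try (rename_i a; induction a using Fin.cases <;>
      try (rename_i a; induction a using Fin.cases))
  all_goals induction b using Fin.cases <;>
    try (rename_i b; induction b using Fin.cases <;>
      try (rename_i b; induction b using Fin.cases))
  all_goals simp only [Fin.cons_zero, Fin.cons_succ, Fin.val_succ, Fin.val_zero]
  all_goals simp -failIfUnchanged [hxw, hww', hxw', hxg, hwg, hw'g, hgg, hww'.symm,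
    G.adj_comm _ x, G.adj_comm (g _)]

variable {t : ℕ} {S : Set V}

/-- Otherwise `x` is the centre of a `t`-broom with leaves `S` and subdivided edge `x w w'`. -/
theorem adj_of_free_tBroom (hG : _root_.Free G (tBroom t)) (hSfin : S.Finite) (hS : S.ncard = t)
    (hSind : G.IsIndepSet S) {x w w' : V} (hxS : CompleteTo G x S) (hwS : AnticompleteTo G w S)
    (hw'S : AnticompleteTo G w' S) (hw : w ∉ S) (hw' : w' ∉ S) (hxw : G.Adj x w)
    (hww' : G.Adj w w') (hxw'_ne : x ≠ w') : G.Adj x w' := by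
  by_contra hxw'
  have : Finite S := hSfin
  obtain ⟨e⟩ : Nonempty (Fin t ≃ S) := Finite.card_eq.mp (by simp [hS])
  have hg : ∀ i, (e i : V) ∈ S := fun i => (e i).2
  refine hG (tBroom_isIndContained (Subtype.val_injective.comp e.injective) hxw hww' hxw'
    hxw'_ne (fun i => hxS _ (hg i)) (fun i => hwS _ (hg i)) (fun i => hw'S _ (hg i))
    (fun i j hij => hSind (hg i) (hg j) hij.ne hij) ?_ ?_)
  · rintro ⟨i, rfl⟩; exact hw (hg i)
  · rintro ⟨i, rfl⟩; exact hw' (hg i)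

theorem exists_isClique_insert_of_subset_nbhd (hG : _root_.Free G (tBroom t)) (hSfin : S.Finite)
    (hS : S.ncard = t) (hSind : G.IsIndepSet S) {U : Set V} (hU : U.Nonempty)
    (hUS : ∀ u ∈ U, CompleteTo G u S) {K : Set V} (hK : G.IsClique K)
    (hKW : K ⊆ {v ∈ nbhd G (U ∪ S) | AnticompleteTo G v S}) :
    ∃ u ∈ U, u ∉ K ∧ G.IsClique (insert u K) := by
  obtain rfl | ⟨w, hw⟩ := K.eq_empty_or_nonempty
  · obtain ⟨u, hu⟩ := hU
    exact ⟨u, hu, Set.notMem_empty u, by simp⟩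
  obtain ⟨⟨-, u, hu, huw⟩, hwS⟩ := hKW hw
  have hu : u ∈ U := hu.resolve_right fun huS => hwS u huS huw.symm
  have huK : u ∉ K := fun huK => (hKW huK).1.1 (Or.inl hu)
  refine ⟨u, hu, huK, hK.insert fun w' hw' hne => ?_⟩
  obtain rfl | hww' := eq_or_ne w w'
  · exact huw
  obtain ⟨⟨hw'US, -⟩, hw'S⟩ := hKW hw'
  exact adj_of_free_tBroom hG hSfin hS hSind (hUS u hu) hwS hw'S
    (fun h => (hKW hw).1.1 (Or.inr h)) (fun h => hw'US (Or.inr h)) huw (hK hw hw' hww') hne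

theorem cliqueNum_induce_lt [Finite V] {s : Set V}
    (h : ∀ K : Finset V, ↑K ⊆ s → G.IsClique (K : Set V) →
      ∃ u ∉ K, G.IsClique (insert u (K : Set V))) :
    (G.induce s).cliqueNum < G.cliqueNum := by
  classical
  obtain ⟨K, hK⟩ := (G.induce s).exists_isNClique_cliqueNum
  rw [isNClique_induce_iff] at hK
  obtain ⟨u, hu, hcl⟩ := h _ (by simp) hK.isClique
  have hle := (show G.IsClique ↑(insert u (K.map (.subtype _))) by
    rwa [Finset.coe_insert]).card_le_cliqueNum
  rw [Finset.card_insert_of_notMem hu, hK.card_eq] at hle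
  omega

end

theorem cliqueNum_W_le_general (t q : ℕ) (hq : 2 ≤ q)
    (V : Type) [Fintype V] (G : SimpleGraph V) (hfree : _root_.Free G (tBroom t))
    (Vs : Fin (q - 1) → Set V) (Vq : Set V)
    (hne : ∀ i, (Vs i).Nonempty) (hVq : Vq.ncard = t)
    (hindepq : ∀ u ∈ Vq, ∀ w ∈ Vq, ¬ G.Adj u w)
    (hcompq : ∀ i, ∀ u ∈ Vs i, ∀ w ∈ Vq, G.Adj u w) :
    (G.induce {v ∈ nbhd G ((⋃ i, Vs i) ∪ Vq) | AnticompleteTo G v Vq}).cliqueNum ≤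
        G.cliqueNum - 1 ∧
      ∀ K : Finset V,
        ↑K ⊆ {v ∈ nbhd G ((⋃ i, Vs i) ∪ Vq) | AnticompleteTo G v Vq} →
        G.IsClique (K : Set V) →
        ∃ u ∈ ⋃ i, Vs i, u ∉ K ∧ G.IsClique (insert u (K : Set V)) := by
  have hU : (⋃ i, Vs i).Nonempty :=
    (hne ⟨0, by omega⟩).mono (Set.subset_iUnion Vs _)
  have hUS : ∀ u ∈ ⋃ i, Vs i, CompleteTo G u Vq := fun u hu => by
    obtain ⟨i, hi⟩ := Set.mem_iUnion.mp hu
    exact hcompq i u hi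
  have extend (K : Finset V) (hKW : (K : Set V) ⊆ _) (hK : G.IsClique (K : Set V)) :=
    exists_isClique_insert_of_subset_nbhd hfree Vq.toFinite hVq
      (fun u hu w hw _ => hindepq u hu w hw) hU hUS hK hKW
  refine ⟨Nat.le_sub_one_of_lt (cliqueNum_induce_lt fun K hKW hK => ?_), extend⟩
  obtain ⟨u, -, hu, hcl⟩ := extend K hKW hK
  exact ⟨u, hu, hcl⟩

/-- With `Q = G[V_1 ∪ ⋯ ∪ V_q]` complete `q`-partite and
`W = {v ∈ N(V(Q)) : v anticomplete to V_q}`, we have `ω(G[W]) ≤ ω(G) - 1`; indeed every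
clique of `G[W]` extends to a larger clique of `G` by adding a vertex of `V_1 ∪ ⋯ ∪ V_{q-1}`. -/
theorem cliqueNum_W_le (t q : ℕ) (ht : 2 ≤ t) (hq : 2 ≤ q)
    (V : Type) [Fintype V] (G : SimpleGraph V) (hfree : _root_.Free G (tBroom t))
    (Vs : Fin (q - 1) → Set V) (Vq : Set V)
    (hne : ∀ i, (Vs i).Nonempty) (hVq : Vq.ncard = t)
    (hdisj : ∀ i j, i ≠ j → Disjoint (Vs i) (Vs j))
    (hdisjq : ∀ i, Disjoint (Vs i) Vq)
    (hindep : ∀ i, ∀ u ∈ Vs i, ∀ w ∈ Vs i, ¬ G.Adj u w)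
    (hindepq : ∀ u ∈ Vq, ∀ w ∈ Vq, ¬ G.Adj u w)
    (hcomp : ∀ i j, i ≠ j → ∀ u ∈ Vs i, ∀ w ∈ Vs j, G.Adj u w)
    (hcompq : ∀ i, ∀ u ∈ Vs i, ∀ w ∈ Vq, G.Adj u w) :
    (G.induce {v ∈ nbhd G ((⋃ i, Vs i) ∪ Vq) | AnticompleteTo G v Vq}).cliqueNum ≤
        G.cliqueNum - 1 ∧
      ∀ K : Finset V,
        ↑K ⊆ {v ∈ nbhd G ((⋃ i, Vs i) ∪ Vq) | AnticompleteTo G v Vq} →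
        G.IsClique (K : Set V) →
        ∃ u ∈ ⋃ i, Vs i, u ∉ K ∧ G.IsClique (insert u (K : Set V)) :=
  cliqueNum_W_le_general t q hq V G hfree Vs Vq hne hVq hindepq hcompq
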